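/- Let q > 0, D > 0, k > 0, R₀ > 0 and let b ∈ ℝ² with b ≠ 0. Then the time-varying channel response under the uniform concentration assumption converges to its asymptotic closed form: the function t ↦ ∫₀^t (q·R₀²/(4Dτ))·exp(−|b|²/(4Dτ) − kτ) dτ tends to (q·R₀²/(2D))·K₀(|b|·√(k/D)) as t → ∞, where K₀(z) = ∫₀^∞ exp(−z·cosh t) dt. -/

import Mathlib

/-!
Writing the integrand as `C · τ⁻¹ · exp (-s²/τ - u²τ)` with `s = |b|/(2√D)` and `u = √k`, the
substitution `τ = (s/u)·eᵗ` turns `τ⁻¹ dτ` into `dt` and the exponent into `-2su·cosh t`, so the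
improper integral over `(0, ∞)` is `C·∫_ℝ exp (-2su·cosh t) dt = 2C·K₀(2su)` by evenness of `cosh`.
Integrability on `(0, ∞)` comes through the same substitution from `exp (-z cosh t) ≤ exp (-z|t|)`.
-/

open Real MeasureTheory Filter

/-- The modified Bessel function of the second kind of order 0,
`K₀(z) = ∫₀^∞ exp(−z·cosh t) dt`. -/
noncomputable def besselK0 (z : ℝ) : ℝ :=
  ∫ t in Set.Ioi (0 : ℝ), Real.exp (-z * Real.cosh t)

open Set

lemma abs_le_cosh (t : ℝ) : |t| ≤ cosh t :=
  (self_le_sinh_iff.2 (abs_nonneg t)).trans ((sinh_lt_cosh _).le.trans_eq (cosh_abs t))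

lemma integrable_of_even_of_integrableOn_Ioi {E : Type*} [NormedAddCommGroup E] {f : ℝ → E}
    (heven : ∀ t, f (-t) = f t) (hf : IntegrableOn f (Ioi 0)) : Integrable f := by
  have hIic : IntegrableOn f (Iic 0) := by
    have hneg : MeasurableEmbedding fun t : ℝ ↦ -t := (Homeomorph.neg ℝ).measurableEmbedding
    rw [← Measure.map_neg_eq_self (volume : Measure ℝ), hneg.integrableOn_map_iff]
    simp_rw [Function.comp_def, heven, neg_preimage, neg_Iic, neg_zero]
    exact (integrableOn_Ici_iff_integrableOn_Ioi (f := f)).2 hf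
  rw [← integrableOn_univ, ← Iic_union_Ioi (a := (0 : ℝ))]
  exact hIic.union hf

lemma integrable_exp_neg_mul_cosh {z : ℝ} (hz : 0 < z) :
    Integrable fun t ↦ exp (-z * cosh t) := by
  refine integrable_of_even_of_integrableOn_Ioi (fun t ↦ by rw [cosh_neg]) ?_
  refine (exp_neg_integrableOn_Ioi 0 hz).mono' (by fun_prop) ?_
  filter_upwards [ae_restrict_mem measurableSet_Ioi] with t ht
  rw [norm_of_nonneg (exp_pos _).le, exp_le_exp, neg_mul, neg_mul, neg_le_neg_iff]
  exact mul_le_mul_of_nonneg_left ((le_abs_self t).trans (abs_le_cosh t)) hz.le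

lemma integral_exp_neg_mul_cosh (z : ℝ) : ∫ t, exp (-z * cosh t) = 2 * besselK0 z := by
  rw [besselK0, ← integral_comp_abs]
  simp only [cosh_abs]

section MulExpSubstitution

variable {E : Type*} [NormedAddCommGroup E] [NormedSpace ℝ E] {m : ℝ}

lemma image_univ_mul_exp (hm : 0 < m) : (fun t ↦ m * exp t) '' univ = Ioi 0 := by
  rw [image_univ, ← mul_zero m, ← image_mul_left_Ioi hm, ← range_exp, ← range_comp]
  rfl

lemma hasDerivWithinAt_mul_exp (t : ℝ) :
    HasDerivWithinAt (fun t ↦ m * exp t) (m * exp t) univ t :=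
  ((hasDerivAt_exp t).const_mul m).hasDerivWithinAt

lemma injOn_mul_exp (hm : 0 < m) : InjOn (fun t ↦ m * exp t) univ :=
  fun _ _ _ _ h ↦ exp_injective (mul_left_cancel₀ hm.ne' h)

lemma integrableOn_Ioi_iff_integrable_mul_exp (hm : 0 < m) (f : ℝ → E) :
    IntegrableOn f (Ioi 0) ↔ Integrable fun t ↦ (m * exp t) • f (m * exp t) := by
  rw [← image_univ_mul_exp hm, integrableOn_image_iff_integrableOn_abs_deriv_smul
    MeasurableSet.univ (fun t _ ↦ hasDerivWithinAt_mul_exp t) (injOn_mul_exp hm),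
    integrableOn_univ]
  simp_rw [abs_of_pos (mul_pos hm (exp_pos _))]

lemma integral_Ioi_eq_integral_mul_exp (hm : 0 < m) (f : ℝ → E) :
    ∫ τ in Ioi 0, f τ = ∫ t, (m * exp t) • f (m * exp t) := by
  rw [← image_univ_mul_exp hm, integral_image_eq_integral_abs_deriv_smul
    MeasurableSet.univ (fun t _ ↦ hasDerivWithinAt_mul_exp t) (injOn_mul_exp hm),
    Measure.restrict_univ]
  simp_rw [abs_of_pos (mul_pos hm (exp_pos _))]

end MulExpSubstitution

section InvMulExp

variable {s u : ℝ}

lemma mul_exp_smul_inv_mul_exp_neg_sq_div_sub (hs : 0 < s) (hu : 0 < u) (t : ℝ) :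
    (s / u * exp t) •
        ((s / u * exp t)⁻¹ * exp (-s ^ 2 / (s / u * exp t) - u ^ 2 * (s / u * exp t)))
      = exp (-(2 * s * u) * cosh t) := by
  have hτ : s / u * exp t ≠ 0 := by positivity
  rw [smul_eq_mul, mul_inv_cancel_left₀ hτ, cosh_eq, exp_neg]
  congr 1
  field_simp
  ring

lemma integrableOn_inv_mul_exp_neg_sq_div_sub (hs : 0 < s) (hu : 0 < u) :
    IntegrableOn (fun τ ↦ τ⁻¹ * exp (-s ^ 2 / τ - u ^ 2 * τ)) (Ioi 0) := by
  rw [integrableOn_Ioi_iff_integrable_mul_exp (div_pos hs hu)]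
  simp_rw [mul_exp_smul_inv_mul_exp_neg_sq_div_sub hs hu]
  exact integrable_exp_neg_mul_cosh (by positivity)

lemma integral_Ioi_inv_mul_exp_neg_sq_div_sub (hs : 0 < s) (hu : 0 < u) :
    ∫ τ in Ioi 0, τ⁻¹ * exp (-s ^ 2 / τ - u ^ 2 * τ) = 2 * besselK0 (2 * s * u) := by
  rw [integral_Ioi_eq_integral_mul_exp (div_pos hs hu)]
  simp_rw [mul_exp_smul_inv_mul_exp_neg_sq_div_sub hs hu]
  exact integral_exp_neg_mul_cosh _

end InvMulExp

theorem uca_time_varying_response_tendsto_general (q D k R₀ : ℝ) (b : EuclideanSpace ℝ (Fin 2))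
    (hD : 0 < D) (hk : 0 < k) (hb : b ≠ 0) :
    Tendsto
      (fun t : ℝ => ∫ τ in (0 : ℝ)..t,
        (q * R₀ ^ 2 / (4 * D * τ)) * Real.exp (-‖b‖ ^ 2 / (4 * D * τ) - k * τ))
      atTop
      (nhds ((q * R₀ ^ 2 / (2 * D)) * besselK0 (‖b‖ * Real.sqrt (k / D)))) := by
  set s := ‖b‖ / (2 * √D)
  set u := √k
  have hs : 0 < s := div_pos (norm_pos_iff.2 hb) (by positivity)
  have hu : 0 < u := sqrt_pos.2 hk
  have hs2 : s ^ 2 = ‖b‖ ^ 2 / (4 * D) := by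
    rw [div_pow, mul_pow, sq_sqrt hD.le]; norm_num
  have hsu : 2 * s * u = ‖b‖ * √(k / D) := by
    rw [sqrt_div hk.le]
    simp only [s, u]
    field_simp
  have hintegrand : (fun τ ↦ (q * R₀ ^ 2 / (4 * D * τ)) * exp (-‖b‖ ^ 2 / (4 * D * τ) - k * τ))
      = fun τ ↦ q * R₀ ^ 2 / (4 * D) * (τ⁻¹ * exp (-s ^ 2 / τ - u ^ 2 * τ)) := by
    ext τ
    rw [hs2, sq_sqrt hk.le]
    ring_nf
  have hvalue : ∫ τ in Ioi 0, q * R₀ ^ 2 / (4 * D) * (τ⁻¹ * exp (-s ^ 2 / τ - u ^ 2 * τ))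
      = q * R₀ ^ 2 / (2 * D) * besselK0 (‖b‖ * √(k / D)) := by
    rw [integral_const_mul, integral_Ioi_inv_mul_exp_neg_sq_div_sub hs hu, hsu]
    field_simp
    ring
  rw [hintegrand, ← hvalue]
  exact intervalIntegral_tendsto_integral_Ioi 0
    ((integrableOn_inv_mul_exp_neg_sq_div_sub hs hu).const_mul _) tendsto_id

/-- For `q > 0`, `D > 0`, `k > 0`, `R₀ > 0` and `b ∈ ℝ²` with `b ≠ 0`, the time-varying channel
response under the uniform concentration assumption converges to its asymptotic closed form:
`t ↦ ∫₀^t (qR₀²/(4Dτ))·exp(−|b|²/(4Dτ) − kτ) dτ` tends to `(qR₀²/(2D))·K₀(|b|·√(k/D))`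
as `t → ∞`. -/
theorem uca_time_varying_response_tendsto (q D k R₀ : ℝ) (b : EuclideanSpace ℝ (Fin 2))
    (hq : 0 < q) (hD : 0 < D) (hk : 0 < k) (hR₀ : 0 < R₀) (hb : b ≠ 0) :
    Tendsto
      (fun t : ℝ => ∫ τ in (0 : ℝ)..t,
        (q * R₀ ^ 2 / (4 * D * τ)) * Real.exp (-‖b‖ ^ 2 / (4 * D * τ) - k * τ))
      atTop
      (nhds ((q * R₀ ^ 2 / (2 * D)) * besselK0 (‖b‖ * Real.sqrt (k / D)))) :=
  uca_time_varying_response_tendsto_general q D k R₀ b hD hk hb
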